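/- Let G be a complete graph on 2n vertices whose exhibited alternating cycle structure consists of a single weighted cycle A alternating between a minimum-cost perfect matching M* and a stable perfect matching M, where edge weights of G agree with cycle distances. If e is an edge of M with maximum weight among M's edges, then increasing w(e) to the total weight of the other cycle edges preserves: (i) the metric property of G restricted to the cycle, (ii) the optimality of M*, and (iii) the stability of M; and after this change the weight of e equals the sum of the weights of all other cycle edges. -/
import Mathlib


/-- Total weight of the cycle on `2n` vertices whose `t`-th edge (from vertex
`t` to vertex `t+1 mod 2n`) has weight `d t`. -/
noncomputable def cycW (n : ℕ) (d : ℕ → ℝ) : ℝ := ∑ t ∈ Finset.range (2*n), d t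

/-- Distance between vertices `i` and `j` in the weighted cycle: the minimum
of the two arcs between them. -/
noncomputable def cycDist (n : ℕ) (d : ℕ → ℝ) (i j : ℕ) : ℝ :=
  min (∑ t ∈ Finset.Ico (min i j) (max i j), d t)
      (cycW n d - ∑ t ∈ Finset.Ico (min i j) (max i j), d t)

/-- The stable matching `M` along the cycle: it consists of the odd cycle
edges, i.e., `x_{2i+1}` is matched to `x_{2i+2 mod 2n}` (in particular `x_0`
is matched to `x_{2n-1}`). -/
def McycFn (n i : ℕ) : ℕ :=
  if i % 2 = 1 then (i + 1) % (2*n) else (i + (2*n - 1)) % (2*n)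

/-- The minimum-cost matching `M*` along the cycle: the even cycle edges,
matching `x_{2i}` with `x_{2i+1}`. -/
def McycStar (i : ℕ) : ℕ := if i % 2 = 0 then i + 1 else i - 1

private lemma min_tri_all {a b c W : ℝ} (ha : 0 ≤ a) (hb : 0 ≤ b) (hc : 0 ≤ c)
    (haW : a ≤ W) (hbW : b ≤ W) (hcW : c ≤ W)
    (hrel : a + b = c ∨ b + c = a ∨ a + c = b) :
    min c (W - c) ≤ min a (W - a) + min b (W - b) := by
  rcases hrel with h|h|h <;> rw [min_def, min_def, min_def] <;> split_ifs <;> linarith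

private lemma cycDist_comm (n : ℕ) (d : ℕ → ℝ) (i j : ℕ) :
    cycDist n d i j = cycDist n d j i := by
  simp [cycDist, min_comm i j, max_comm i j]

private lemma arc_nonneg (n : ℕ) (d : ℕ → ℝ) (h : ∀ t < 2*n, 0 ≤ d t)
    {i j : ℕ} (hj : j ≤ 2*n) : 0 ≤ ∑ t ∈ Finset.Ico i j, d t :=
  Finset.sum_nonneg fun t ht => h t (lt_of_lt_of_le (Finset.mem_Ico.1 ht).2 hj)

private lemma arc_le_W (n : ℕ) (d : ℕ → ℝ) (h : ∀ t < 2*n, 0 ≤ d t)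
    {i j : ℕ} (hj : j ≤ 2*n) : ∑ t ∈ Finset.Ico i j, d t ≤ cycW n d := by
  unfold cycW
  apply Finset.sum_le_sum_of_subset_of_nonneg
  · intro t ht; exact Finset.mem_range.2 (lt_of_lt_of_le (Finset.mem_Ico.1 ht).2 hj)
  · intro t ht _; exact h t (Finset.mem_range.1 ht)

private lemma cyc_tri (n : ℕ) (d : ℕ → ℝ) (h : ∀ t < 2*n, 0 ≤ d t)
    {x y z : ℕ} (hx : x < 2*n) (hy : y < 2*n) (hz : z < 2*n) :
    cycDist n d x z ≤ cycDist n d x y + cycDist n d y z := by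
  have key : ∀ p q r : ℕ, p ≤ q → q ≤ r →
      (∑ t ∈ Finset.Ico p q, d t) + (∑ t ∈ Finset.Ico q r, d t) =
        ∑ t ∈ Finset.Ico p r, d t :=
    fun p q r h1 h2 => Finset.sum_Ico_consecutive d h1 h2
  have hxy := (max_lt hx hy).le
  have hyz := (max_lt hy hz).le
  have hxz := (max_lt hx hz).le
  unfold cycDist
  apply min_tri_all (arc_nonneg n d h hxy) (arc_nonneg n d h hyz) (arc_nonneg n d h hxz)
    (arc_le_W n d h hxy) (arc_le_W n d h hyz) (arc_le_W n d h hxz)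
  rcases le_total x y with h1|h1 <;> rcases le_total y z with h2|h2
  · rcases le_total x z with h3|h3
    · rw [min_eq_left h1, max_eq_right h1, min_eq_left h2, max_eq_right h2,
        min_eq_left h3, max_eq_right h3]
      exact Or.inl (key _ _ _ h1 h2)
    · have h3' := h1.trans h2
      rw [min_eq_left h1, max_eq_right h1, min_eq_left h2, max_eq_right h2,
        min_eq_left h3', max_eq_right h3']
      exact Or.inl (key _ _ _ h1 h2)
  · rcases le_total x z with h3|h3
    · -- x ≤ z ≤ y
      rw [min_eq_left h1, max_eq_right h1, min_eq_right h2, max_eq_left h2,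
        min_eq_left h3, max_eq_right h3]
      exact Or.inr (Or.inl (by rw [add_comm]; exact key _ _ _ h3 h2))
    · -- z ≤ x ≤ y
      rw [min_eq_left h1, max_eq_right h1, min_eq_right h2, max_eq_left h2,
        min_eq_right h3, max_eq_left h3]
      exact Or.inr (Or.inr (by rw [add_comm]; exact key _ _ _ h3 h1))
  · rcases le_total x z with h3|h3
    · -- y ≤ x ≤ z
      rw [min_eq_right h1, max_eq_left h1, min_eq_left h2, max_eq_right h2,
        min_eq_left h3, max_eq_right h3]
      exact Or.inr (Or.inr (key _ _ _ h1 h3))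
    · -- y ≤ z ≤ x
      rw [min_eq_right h1, max_eq_left h1, min_eq_left h2, max_eq_right h2,
        min_eq_right h3, max_eq_left h3]
      exact Or.inr (Or.inl (key _ _ _ h2 h3))
  · -- z ≤ y ≤ x
    have h3' := h2.trans h1
    rw [min_eq_right h1, max_eq_left h1, min_eq_right h2, max_eq_left h2,
      min_eq_right h3', max_eq_left h3']
    exact Or.inl (by rw [add_comm]; exact key _ _ _ h2 h1)

private lemma cycDist_adj (n : ℕ) (e : ℕ → ℝ) (t : ℕ) (ht : t < 2*n) :
    cycDist n e t ((t+1) % (2*n)) = min (e t) (cycW n e - e t) := by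
  rcases Nat.lt_or_ge (t+1) (2*n) with h|h
  · rw [Nat.mod_eq_of_lt h]
    unfold cycDist
    rw [min_eq_left (Nat.le_succ t), max_eq_right (Nat.le_succ t)]
    have hico : Finset.Ico t (t+1) = {t} := by ext a; simp
    rw [hico, Finset.sum_singleton]
  · have ht1 : t + 1 = 2*n := by omega
    rw [ht1, Nat.mod_self]
    unfold cycDist cycW
    rw [min_eq_right (Nat.zero_le t), max_eq_left (Nat.zero_le t), ← Finset.range_eq_Ico,
      ← ht1, Finset.sum_range_succ, add_sub_cancel_left, add_sub_cancel_right, min_comm]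

/-- In a weighted cycle matching configuration — the complete
graph on `2n` vertices `x_0, …, x_{2n-1}` arranged on an alternating cycle
with positive cycle-edge weights `d`, graph weights equal to cycle distances
(so each cycle edge is a shortest path: `2 d t ≤ W`), `M*` the even cycle
edges (a minimum-cost perfect matching) and `M` the odd cycle edges (a stable
perfect matching) — if `m` indexes an edge of `M` of maximum weight among
`M`'s edges, then raising `w(e_m)` to the total weight `W_{-e}` of the other
cycle edges preserves (i) metricity (triangle inequality and positivity of the
induced distances), (ii) the optimality of `M*`, and (iii) the stability of
`M`; and afterwards the weight of `e_m` equals the sum of the weights of all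
other cycle edges. -/
theorem stmt_19 (n : ℕ) (hn : 1 ≤ n) (d : ℕ → ℝ)
    (hdpos : ∀ t < 2*n, 0 < d t)
    -- edge weights agree with cycle distances
    (hshort : ∀ t < 2*n, 2 * d t ≤ cycW n d)
    -- M is stable
    (hstable : ∀ u v : ℕ, u < 2*n → v < 2*n → u ≠ v → McycFn n u ≠ v →
      ¬ (cycDist n d u v <
          min (cycDist n d u (McycFn n u)) (cycDist n d v (McycFn n v))))
    -- M* is a minimum-cost perfect matching
    (hopt : ∀ M : ℕ → ℕ, (∀ i < 2*n, M i < 2*n ∧ M (M i) = i ∧ M i ≠ i) →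
      (∑ i ∈ Finset.range (2*n), cycDist n d i (McycStar i)) ≤
        ∑ i ∈ Finset.range (2*n), cycDist n d i (M i))
    -- e_m is an edge of M (odd cycle edge) of maximum weight among M's edges
    (m : ℕ) (hm : m < 2*n) (hmodd : m % 2 = 1)
    (hmax : ∀ t < 2*n, t % 2 = 1 → d t ≤ d m) :
    -- d' raises the weight of e_m to the total weight of all other cycle edges
    let d' : ℕ → ℝ := fun t => if t = m then cycW n d - d m else d t
    -- (i) metricity is preserved
    (∀ x y : ℕ, x < 2*n → y < 2*n → x ≠ y → 0 < cycDist n d' x y) ∧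
    (∀ x y z : ℕ, x < 2*n → y < 2*n → z < 2*n →
      cycDist n d' x z ≤ cycDist n d' x y + cycDist n d' y z) ∧
    -- (ii) M* remains a minimum-cost perfect matching
    (∀ M : ℕ → ℕ, (∀ i < 2*n, M i < 2*n ∧ M (M i) = i ∧ M i ≠ i) →
      (∑ i ∈ Finset.range (2*n), cycDist n d' i (McycStar i)) ≤
        ∑ i ∈ Finset.range (2*n), cycDist n d' i (M i)) ∧
    -- (iii) M remains stable
    (∀ u v : ℕ, u < 2*n → v < 2*n → u ≠ v → McycFn n u ≠ v →
      ¬ (cycDist n d' u v <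
          min (cycDist n d' u (McycFn n u)) (cycDist n d' v (McycFn n v)))) ∧
    -- the new weight of e_m is the sum of the weights of the other cycle edges
    cycDist n d' m ((m + 1) % (2*n)) =
      ∑ t ∈ (Finset.range (2*n)).erase m, d' t := by
  intro d'
  have hd'def : ∀ t, d' t = if t = m then cycW n d - d m else d t := fun t => rfl
  have hdm2 : 2 * d m ≤ cycW n d := hshort m hm
  have hdmpos : 0 < d m := hdpos m hm
  have hδ : (0:ℝ) ≤ cycW n d - 2 * d m := by linarith
  -- d' pointwise
  have hd'eq : ∀ t, d' t = d t + (if t = m then (cycW n d - 2 * d m) else 0) := by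
    intro t
    by_cases h : t = m
    · subst h; simp [hd'def]; ring
    · simp [hd'def, h]
  have hsum : ∀ s : Finset ℕ, ∑ t ∈ s, d' t =
      (∑ t ∈ s, d t) + (if m ∈ s then (cycW n d - 2 * d m) else 0) := by
    intro s
    simp only [hd'eq, Finset.sum_add_distrib]
    congr 1
    exact Finset.sum_ite_eq' s m (fun _ => cycW n d - 2 * d m)
  have hW' : cycW n d' = cycW n d + (cycW n d - 2 * d m) := by
    have := hsum (Finset.range (2*n))
    rwa [if_pos (Finset.mem_range.2 hm)] at this
  have hd'pos : ∀ t < 2*n, 0 < d' t := by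
    intro t ht
    rw [hd'def]
    split_ifs with h
    · linarith
    · exact hdpos t ht
  have hd'nn : ∀ t < 2*n, 0 ≤ d' t := fun t ht => (hd'pos t ht).le
  have hdnn : ∀ t < 2*n, 0 ≤ d t := fun t ht => (hdpos t ht).le
  -- monotonicity
  have mono : ∀ i j : ℕ, i < 2*n → j < 2*n → cycDist n d i j ≤ cycDist n d' i j := by
    intro i j hi hj
    unfold cycDist
    rw [hW', hsum]
    have hχ : (0:ℝ) ≤ (if m ∈ Finset.Ico (min i j) (max i j) then cycW n d - 2*d m else 0) ∧
        (if m ∈ Finset.Ico (min i j) (max i j) then cycW n d - 2*d m else 0) ≤ cycW n d - 2*d m := by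
      split_ifs <;> constructor <;> linarith
    refine le_min ?_ ?_
    · exact (min_le_left _ _).trans (by linarith [hχ.1])
    · exact (min_le_right _ _).trans (by linarith [hχ.2])
  -- evenness of (m+1) % (2n)
  have hp2 : (m+1) % (2*n) % 2 = 0 := by
    rcases (show m + 1 = 2*n ∨ m + 1 < 2*n by omega) with h|h
    · rw [h, Nat.mod_self]
    · rw [Nat.mod_eq_of_lt h]; omega
  -- key structure lemma for M-edges
  have key : ∀ u, u < 2*n → ∃ t, t < 2*n ∧ t % 2 = 1 ∧
      McycFn n u = (if u = t then (t+1) % (2*n) else t) ∧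
      (∀ e : ℕ → ℝ, cycDist n e u (McycFn n u) = min (e t) (cycW n e - e t)) ∧
      (t = m ↔ (u = m ∨ u = (m+1) % (2*n))) := by
    intro u hu
    rcases Nat.even_or_odd u with he|ho
    · have hu2 : u % 2 = 0 := Nat.even_iff.1 he
      rcases Nat.eq_zero_or_pos u with h0|h0
      · -- u = 0, t = 2n-1
        subst h0
        have ht : 2*n - 1 < 2*n := by omega
        have hMu : McycFn n 0 = 2*n - 1 := by
          unfold McycFn
          simp [Nat.mod_eq_of_lt ht]
        refine ⟨2*n - 1, ht, by omega, ?_, ?_, ?_⟩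
        · rw [hMu, if_neg (by omega)]
        · intro e
          have h1 : (2*n - 1 + 1) % (2*n) = 0 := by
            rw [show 2*n - 1 + 1 = 2*n by omega, Nat.mod_self]
          rw [hMu, cycDist_comm, ← h1, cycDist_adj n e _ ht]
        · constructor
          · intro h; right
            rw [show m + 1 = 2*n by omega, Nat.mod_self]
          · rintro (h|h)
            · omega
            · rcases (show m + 1 = 2*n ∨ m + 1 < 2*n by omega) with h2|h2
              · omega
              · rw [Nat.mod_eq_of_lt h2] at h; omega
      · -- u even ≥ 2, t = u - 1
        have hu2' : 2 ≤ u := by omega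
        have htlt : u - 1 < 2*n := by omega
        have hMu : McycFn n u = u - 1 := by
          unfold McycFn
          rw [if_neg (by omega), show u + (2*n - 1) = (u - 1) + 2*n by omega,
            Nat.add_mod_right, Nat.mod_eq_of_lt htlt]
        refine ⟨u - 1, htlt, by omega, ?_, ?_, ?_⟩
        · rw [hMu, if_neg (by omega)]
        · intro e
          have h1 : (u - 1 + 1) % (2*n) = u := by
            rw [show u - 1 + 1 = u by omega, Nat.mod_eq_of_lt hu]
          have h2 := cycDist_adj n e (u-1) htlt
          rw [h1] at h2
          rw [hMu, cycDist_comm]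
          exact h2
        · constructor
          · intro h; right
            rw [show m + 1 = u by omega, Nat.mod_eq_of_lt hu]
          · rintro (h|h)
            · omega
            · rcases (show m + 1 = 2*n ∨ m + 1 < 2*n by omega) with h2|h2
              · rw [show (m+1) % (2*n) = 0 by rw [h2, Nat.mod_self]] at h; omega
              · rw [Nat.mod_eq_of_lt h2] at h; omega
    · -- u odd, t = u
      have hu2 : u % 2 = 1 := Nat.odd_iff.1 ho
      have hMu : McycFn n u = (u+1) % (2*n) := by unfold McycFn; rw [if_pos hu2]
      refine ⟨u, hu, hu2, ?_, ?_, ?_⟩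
      · rw [hMu, if_pos rfl]
      · intro e; rw [hMu]; exact cycDist_adj n e u hu
      · constructor
        · intro h; exact Or.inl h
        · rintro (h|h)
          · exact h
          · exfalso; rw [h] at hu2; omega
  -- values of matched-edge distances
  have valD : ∀ t, t < 2*n → min (d t) (cycW n d - d t) = d t := by
    intro t ht
    have := hshort t ht
    rw [min_eq_left]; linarith
  have valD' : ∀ t, t < 2*n → t ≠ m → min (d' t) (cycW n d' - d' t) = d t := by
    intro t ht htm
    have h1 : d' t = d t := by rw [hd'def, if_neg htm]
    have := hshort t ht
    rw [h1, hW', min_eq_left]; linarith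
  have valD'm : min (d' m) (cycW n d' - d' m) = cycW n d - d m := by
    have h1 : d' m = cycW n d - d m := by rw [hd'def, if_pos rfl]
    have h2 : cycW n d' - d' m = cycW n d - d m := by rw [h1, hW']; ring
    rw [h2, h1, min_self]
  -- M* distances
  have hstar : ∀ e : ℕ → ℝ, ∀ i, i < 2*n →
      cycDist n e i (McycStar i) = min (e (2*(i/2))) (cycW n e - e (2*(i/2))) := by
    intro e i hi
    rcases Nat.even_or_odd i with he|ho
    · have hi2 : i % 2 = 0 := Nat.even_iff.1 he
      have h2i : 2*(i/2) = i := by omega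
      have hMi : McycStar i = i + 1 := by unfold McycStar; rw [if_pos hi2]
      have hlt : i + 1 < 2*n := by omega
      rw [hMi, h2i, ← Nat.mod_eq_of_lt hlt, cycDist_adj n e i hi]
    · have hi2 : i % 2 = 1 := Nat.odd_iff.1 ho
      have h2i : 2*(i/2) = i - 1 := by omega
      have hMi : McycStar i = i - 1 := by unfold McycStar; rw [if_neg (by omega)]
      have hlt : i - 1 < 2*n := by omega
      have h1 : (i - 1 + 1) % (2*n) = i := by
        rw [show i - 1 + 1 = i by omega, Nat.mod_eq_of_lt hi]
      have h2 := cycDist_adj n e (i-1) hlt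
      rw [h1] at h2
      rw [hMi, h2i, cycDist_comm]
      exact h2
  refine ⟨?_, ?_, ?_, ?_, ?_⟩
  · -- positivity
    intro x y hx hy hxy
    unfold cycDist
    have hminmax : min x y < max x y := by
      rcases Nat.lt_or_ge x y with h|h
      · rw [min_eq_left h.le, max_eq_right h.le]; exact h
      · have : y < x := by omega
        rw [min_eq_right this.le, max_eq_left this.le]; exact this
    have hsub : Finset.Ico (min x y) (max x y) ⊆ Finset.range (2*n) := by
      intro t ht
      exact Finset.mem_range.2 (lt_of_lt_of_le (Finset.mem_Ico.1 ht).2 (max_lt hx hy).le)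
    have hpos1 : 0 < ∑ t ∈ Finset.Ico (min x y) (max x y), d' t := by
      apply Finset.sum_pos
      · intro t ht; exact hd'pos t (Finset.mem_range.1 (hsub ht))
      · exact Finset.nonempty_Ico.2 hminmax
    have hpos2 : 0 < cycW n d' - ∑ t ∈ Finset.Ico (min x y) (max x y), d' t := by
      have hsplit := Finset.sum_sdiff (f := d') hsub
      have hmem : max x y ∈ Finset.range (2*n) \ Finset.Ico (min x y) (max x y) := by
        simp [Finset.mem_sdiff, Finset.mem_range, max_lt hx hy]
      have hpos3 : 0 < ∑ t ∈ Finset.range (2*n) \ Finset.Ico (min x y) (max x y), d' t := by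
        apply Finset.sum_pos
        · intro t ht
          exact hd'pos t (Finset.mem_range.1 (Finset.mem_sdiff.1 ht).1)
        · exact ⟨max x y, hmem⟩
      unfold cycW
      linarith [hsplit]
    exact lt_min hpos1 hpos2
  · -- triangle
    intro x y z hx hy hz
    exact cyc_tri n d' hd'nn hx hy hz
  · -- optimality
    intro M hM
    have h1 : ∑ i ∈ Finset.range (2*n), cycDist n d' i (McycStar i) =
        ∑ i ∈ Finset.range (2*n), cycDist n d i (McycStar i) := by
      apply Finset.sum_congr rfl
      intro i hi
      have hi' := Finset.mem_range.1 hi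
      have hev : 2*(i/2) < 2*n := by omega
      have hevm : 2*(i/2) ≠ m := by omega
      rw [hstar d' i hi', hstar d i hi', valD' _ hev hevm, valD _ hev]
    have h2 : ∑ i ∈ Finset.range (2*n), cycDist n d i (M i) ≤
        ∑ i ∈ Finset.range (2*n), cycDist n d' i (M i) := by
      apply Finset.sum_le_sum
      intro i hi
      have hi' := Finset.mem_range.1 hi
      exact mono i (M i) hi' (hM i hi').1
    calc ∑ i ∈ Finset.range (2*n), cycDist n d' i (McycStar i)
        = ∑ i ∈ Finset.range (2*n), cycDist n d i (McycStar i) := h1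
      _ ≤ ∑ i ∈ Finset.range (2*n), cycDist n d i (M i) := hopt M hM
      _ ≤ ∑ i ∈ Finset.range (2*n), cycDist n d' i (M i) := h2
  · -- stability
    intro u v hu hv huv hMuv
    obtain ⟨tu, htu, htuo, hMu, hDu, hiffu⟩ := key u hu
    obtain ⟨tv, htv, htvo, hMv, hDv, hiffv⟩ := key v hv
    by_cases hum : tu = m
    · by_cases hvm : tv = m
      · -- contradiction: v must be McycFn n u
        exfalso; apply hMuv
        have hu' := hiffu.mp hum
        have hv' := hiffv.mp hvm
        rcases hu' with h|h <;> rcases hv' with h'|h'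
        · omega
        · rw [hMu, if_pos (by omega : u = tu), hum, ← h']
        · rw [hMu, if_neg ?_, hum, ← h']
          intro hc
          rw [hc, hum] at h
          have := hp2; omega
        · exfalso
          exact huv (h.trans h'.symm)
      · -- tu = m, tv ≠ m
        intro hlt
        have h1 := hstable u v hu hv huv hMuv
        rw [hDu d, hDv d, valD tu htu, valD tv htv] at h1
        push_neg at h1
        rw [hDu d', hDv d', hum, valD'm, valD' tv htv hvm] at hlt
        have hmx := hmax tv htv htvo
        have hmin1 : min (d tu) (d tv) = d tv := by rw [hum]; exact min_eq_right hmx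
        have := mono u v hu hv
        have hmin2 : min (cycW n d - d m) (d tv) ≤ d tv := min_le_right _ _
        linarith [h1, hlt]
    · by_cases hvm : tv = m
      · -- tu ≠ m, tv = m
        intro hlt
        have h1 := hstable u v hu hv huv hMuv
        rw [hDu d, hDv d, valD tu htu, valD tv htv] at h1
        push_neg at h1
        rw [hDu d', hDv d', hvm, valD'm, valD' tu htu hum] at hlt
        have hmx := hmax tu htu htuo
        have hmin1 : min (d tu) (d tv) = d tu := by rw [hvm]; exact min_eq_left hmx
        have := mono u v hu hv
        have hmin2 : min (d tu) (cycW n d - d m) ≤ d tu := min_le_left _ _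
        linarith [h1, hlt]
      · -- neither
        intro hlt
        have h1 := hstable u v hu hv huv hMuv
        rw [hDu d, hDv d, valD tu htu, valD tv htv] at h1
        push_neg at h1
        rw [hDu d', hDv d', valD' tu htu hum, valD' tv htv hvm] at hlt
        have := mono u v hu hv
        linarith [h1, hlt]
  · -- final equality
    rw [cycDist_adj n d' m hm, valD'm]
    have hsplit := Finset.sum_erase_add (Finset.range (2*n)) d' (Finset.mem_range.2 hm)
    have h1 : d' m = cycW n d - d m := by rw [hd'def, if_pos rfl]
    have h2 : (∑ t ∈ (Finset.range (2*n)).erase m, d' t) = cycW n d' - d' m := by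
      unfold cycW; linarith [hsplit]
    rw [h2, hW', h1]; ring
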